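/- Let G be a connected unbalanced signed graph such that for every edge e the graph G - e contains no balanced connected component. Then every edge of G belongs either to a balanced circuit or to a weak unbalanced bicircuit of G. -/

import Mathlib

open Finset

/-- A signed multigraph on vertex type `V` with edge type `E`: each edge `e`
consists of two half-edges indexed by `Bool`; `ends e i` is the end-vertex at
which the half-edge `(e, i)` is attached (loops and multiple edges are
allowed), and `sign e ∈ {1, -1}` is the sign of the edge `e`. -/
structure SignedGraph (V E : Type) where
  ends : E → Bool → V
  sign : E → ℤˣ

namespace SignedGraph

variable {V E : Type} [Fintype V] [Fintype E] [DecidableEq V] [DecidableEq E]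

/-- The valency of `v` in the subgraph spanned by the edge set `S`:
the number of half-edges of edges of `S` attached at `v` (a loop at `v`
contributes `2`). -/
def valencyOn (G : SignedGraph V E) (S : Finset E) (v : V) : ℕ :=
  (univ.filter fun p : E × Bool => p.1 ∈ S ∧ G.ends p.1 p.2 = v).card

/-- The valency of a vertex in `G`. -/
def valency (G : SignedGraph V E) (v : V) : ℕ :=
  G.valencyOn univ v

/-- The set of vertices incident with some edge of `S`. -/
def suppV (G : SignedGraph V E) (S : Finset E) : Finset V :=
  univ.filter fun v => ∃ e ∈ S, ∃ i : Bool, G.ends e i = v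

/-- `u` and `v` are joined by an edge of `S`. -/
def AdjOn (G : SignedGraph V E) (S : Finset E) (u v : V) : Prop :=
  ∃ e ∈ S, ∃ i : Bool, G.ends e i = u ∧ G.ends e (!i) = v

/-- The subgraph spanned by the edge set `S` is connected: any two vertices
incident with edges of `S` are joined by a walk using edges of `S`. -/
def ConnOn (G : SignedGraph V E) (S : Finset E) : Prop :=
  ∀ u ∈ G.suppV S, ∀ v ∈ G.suppV S, Relation.ReflTransGen (G.AdjOn S) u v

/-- `G` is connected (as a graph on the whole vertex set `V`). -/
def Connected (G : SignedGraph V E) : Prop :=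
  Nonempty V ∧ ∀ u v : V, Relation.ReflTransGen (G.AdjOn univ) u v

/-- The edge set `S` spans a circuit: a nonempty connected `2`-regular
subgraph. -/
def IsCircuit (G : SignedGraph V E) (S : Finset E) : Prop :=
  S.Nonempty ∧ G.ConnOn S ∧ ∀ v ∈ G.suppV S, G.valencyOn S v = 2

/-- The sign of a set of edges: the product of the signs of its edges. -/
def signOf (G : SignedGraph V E) (S : Finset E) : ℤˣ :=
  ∏ e ∈ S, G.sign e

/-- The negative edges among `S`. -/
def negEdges (G : SignedGraph V E) (S : Finset E) : Finset E :=
  S.filter fun e => G.sign e = -1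

/-- A balanced circuit: a circuit of sign `+1`. -/
def IsBalancedCircuit (G : SignedGraph V E) (S : Finset E) : Prop :=
  G.IsCircuit S ∧ G.signOf S = 1

/-- An unbalanced circuit: a circuit of sign `-1`. -/
def IsUnbalancedCircuit (G : SignedGraph V E) (S : Finset E) : Prop :=
  G.IsCircuit S ∧ G.signOf S = -1

/-- `G` is balanced: it contains no unbalanced circuit. -/
def Balanced (G : SignedGraph V E) : Prop :=
  ∀ S : Finset E, G.IsCircuit S → G.signOf S = 1

/-- `G` is tightly unbalanced: it is unbalanced, but for some edge `f` the
graph `G - f` is balanced. -/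
def TightlyUnbalanced (G : SignedGraph V E) : Prop :=
  ¬ G.Balanced ∧ ∃ f : E, ∀ S : Finset E, G.IsCircuit S → f ∉ S → G.signOf S = 1

/-- `G` is eulerian: connected with all valencies even. -/
def Eulerian (G : SignedGraph V E) : Prop :=
  G.Connected ∧ ∀ v : V, Even (G.valency v)

/-- The edge set `S` spans an eulerian subgraph of `G`. -/
def EulerianOn (G : SignedGraph V E) (S : Finset E) : Prop :=
  S.Nonempty ∧ G.ConnOn S ∧ ∀ v : V, Even (G.valencyOn S v)

/-- An orientation (bidirection) of `G`: `dir e i = true` means that the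
half-edge `(e, i)` is directed towards its end-vertex, `dir e i = false` that
it is directed away from it.  Compatibility: a positive edge becomes an
ordinary directed edge (one half-edge in, one out) and a negative edge becomes
a broken (extroverted or introverted) edge. -/
structure Orientation (G : SignedGraph V E) where
  dir : E → Bool → Bool
  compat : ∀ e : E, G.sign e = 1 ↔ dir e false ≠ dir e true

/-- `φ` is a flow on `G` with respect to the orientation `O`: at every vertex
`v`, the sum of values on half-edges directed into `v` equals the sum of
values on half-edges directed out of `v` (Kirchhoff's law). -/
def IsFlow {A : Type} [AddCommGroup A] (G : SignedGraph V E)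
    (O : G.Orientation) (φ : E → A) : Prop :=
  ∀ v : V,
    ∑ p ∈ univ.filter (fun p : E × Bool => G.ends p.1 p.2 = v),
      (if O.dir p.1 p.2 then φ p.1 else -φ p.1) = 0

/-- `G` admits a nowhere-zero `A`-flow. -/
def HasNZFlow (G : SignedGraph V E) (A : Type) [AddCommGroup A] : Prop :=
  ∃ (O : G.Orientation) (φ : E → A), G.IsFlow O φ ∧ ∀ e : E, φ e ≠ 0

/-- `G` is flow-admissible: it admits a nowhere-zero integer flow. -/
def FlowAdmissible (G : SignedGraph V E) : Prop :=
  ∃ (O : G.Orientation) (φ : E → ℤ), G.IsFlow O φ ∧ ∀ e : E, φ e ≠ 0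

/-- `G` admits a nowhere-zero `k`-flow: an integer flow with all values in
`{±1, …, ±(k-1)}`. -/
def HasNZkFlow (G : SignedGraph V E) (k : ℕ) : Prop :=
  ∃ (O : G.Orientation) (φ : E → ℤ), G.IsFlow O φ ∧
    ∀ e : E, φ e ≠ 0 ∧ |φ e| < (k : ℤ)

/-- `G` is triply odd: it can be decomposed into three edge-disjoint eulerian
subgraphs, each with an odd number of negative edges, sharing a common
vertex. -/
def TriplyOdd (G : SignedGraph V E) : Prop :=
  ∃ S₁ S₂ S₃ : Finset E,
    Disjoint S₁ S₂ ∧ Disjoint S₁ S₃ ∧ Disjoint S₂ S₃ ∧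
    S₁ ∪ S₂ ∪ S₃ = univ ∧
    G.EulerianOn S₁ ∧ G.EulerianOn S₂ ∧ G.EulerianOn S₃ ∧
    Odd (G.negEdges S₁).card ∧ Odd (G.negEdges S₂).card ∧
    Odd (G.negEdges S₃).card ∧
    ∃ v : V, v ∈ G.suppV S₁ ∧ v ∈ G.suppV S₂ ∧ v ∈ G.suppV S₃

/-- The edge set `P` spans a (nontrivial) path from `u` to `v`: a connected
subgraph in which `u` and `v` have valency `1` and all other vertices have
valency `2`. -/
def IsPathOn (G : SignedGraph V E) (P : Finset E) (u v : V) : Prop :=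
  u ≠ v ∧ G.ConnOn P ∧ u ∈ G.suppV P ∧ v ∈ G.suppV P ∧
  G.valencyOn P u = 1 ∧ G.valencyOn P v = 1 ∧
  ∀ w ∈ G.suppV P, w ≠ u → w ≠ v → G.valencyOn P w = 2

/-- `T` spans a signed circuit of type (2): the union of two unbalanced
circuits meeting at a single vertex. -/
def IsType2 (G : SignedGraph V E) (T : Finset E) : Prop :=
  ∃ (S₁ S₂ : Finset E) (v : V),
    G.IsUnbalancedCircuit S₁ ∧ G.IsUnbalancedCircuit S₂ ∧ Disjoint S₁ S₂ ∧
    G.suppV S₁ ∩ G.suppV S₂ = {v} ∧ S₁ ∪ S₂ = T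

/-- `T` spans a signed circuit of type (3): the union of two vertex-disjoint
unbalanced circuits together with a path meeting the circuits only at its
ends. -/
def IsType3 (G : SignedGraph V E) (T : Finset E) : Prop :=
  ∃ (S₁ S₂ P : Finset E) (u v : V),
    G.IsUnbalancedCircuit S₁ ∧ G.IsUnbalancedCircuit S₂ ∧
    Disjoint (G.suppV S₁) (G.suppV S₂) ∧
    G.IsPathOn P u v ∧ u ∈ G.suppV S₁ ∧ v ∈ G.suppV S₂ ∧
    G.suppV P ∩ G.suppV S₁ = {u} ∧ G.suppV P ∩ G.suppV S₂ = {v} ∧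
    Disjoint P (S₁ ∪ S₂) ∧ S₁ ∪ S₂ ∪ P = T

/-- `T` spans a signed circuit: a balanced circuit, or a signed circuit of
type (2) or (3). -/
def IsSignedCircuit (G : SignedGraph V E) (T : Finset E) : Prop :=
  G.IsBalancedCircuit T ∨ G.IsType2 T ∨ G.IsType3 T

/-- `T` spans a weak unbalanced bicircuit: two edge-disjoint unbalanced
circuits (not necessarily vertex-disjoint) joined by a possibly trivial path
having no edge in the two circuits. -/
def IsWeakBicircuit (G : SignedGraph V E) (T : Finset E) : Prop :=
  ∃ C₁ C₂ : Finset E,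
    G.IsUnbalancedCircuit C₁ ∧ G.IsUnbalancedCircuit C₂ ∧ Disjoint C₁ C₂ ∧
    (((∃ v : V, v ∈ G.suppV C₁ ∧ v ∈ G.suppV C₂) ∧ T = C₁ ∪ C₂) ∨
      ∃ (P : Finset E) (u v : V),
        G.IsPathOn P u v ∧ u ∈ G.suppV C₁ ∧ v ∈ G.suppV C₂ ∧
        Disjoint P (C₁ ∪ C₂) ∧ T = C₁ ∪ C₂ ∪ P)

/-- Every connected component of `G - f` contains an unbalanced circuit,
i.e. `G - f` has no balanced component. -/
def NoBalancedComponentAvoiding (G : SignedGraph V E) (f : E) : Prop :=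
  ∀ u : V, ∃ S : Finset E,
    G.IsCircuit S ∧ G.signOf S = -1 ∧ f ∉ S ∧
    ∀ w ∈ G.suppV S, Relation.ReflTransGen (G.AdjOn (univ.erase f)) w u

/-- `G` is 2-edge-connected: connected, and still connected after removing
any single edge. -/
def TwoEdgeConnected (G : SignedGraph V E) : Prop :=
  G.Connected ∧ ∀ f : E, ∀ u v : V,
    Relation.ReflTransGen (G.AdjOn (univ.erase f)) u v

/-- `G` is antibalanced: replacing its signature `σ` by `-σ` makes it
balanced. -/
def Antibalanced (G : SignedGraph V E) : Prop :=
  ∀ S : Finset E, G.IsCircuit S → (∏ e ∈ S, (-G.sign e)) = 1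

end SignedGraph

namespace SignedGraph

open Finset

set_option linter.unusedSectionVars false

variable {V E : Type} [Fintype V] [Fintype E] [DecidableEq V] [DecidableEq E]

/-- Walks as lists of half-edge steps. A step `(e, i)` goes from `ends e i`
to `ends e (!i)`. -/
inductive Walk (G : SignedGraph V E) (S : Finset E) :
    List (E × Bool) → V → V → Prop
  | nil (v : V) : Walk G S [] v v
  | cons {p : E × Bool} {l : List (E × Bool)} {a c : V}
      (he : p.1 ∈ S) (h1 : G.ends p.1 p.2 = a)
      (hw : Walk G S l (G.ends p.1 (!p.2)) c) : Walk G S (p :: l) a c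

variable (G : SignedGraph V E)

/-- The vertex list of a walk with steps `l` starting at `a`. -/
def verts (l : List (E × Bool)) (a : V) : List V :=
  a :: l.map fun p => G.ends p.1 (!p.2)

/-- The edges of a walk as a finset. -/
def edgesOf (l : List (E × Bool)) : Finset E := (l.map Prod.fst).toFinset

variable {G}

theorem walk_nil_iff {S : Finset E} {a b : V} : G.Walk S [] a b ↔ a = b := by
  constructor
  · intro h; cases h; rfl
  · rintro rfl; exact Walk.nil a

theorem Walk.mono {S T : Finset E} (hST : S ⊆ T) {l a b}
    (h : G.Walk S l a b) : G.Walk T l a b := by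
  induction h with
  | nil v => exact Walk.nil v
  | cons he h1 hw ih => exact Walk.cons (hST he) h1 ih

theorem Walk.edge_mem {S : Finset E} {l a b} (h : G.Walk S l a b)
    {p : E × Bool} (hp : p ∈ l) : p.1 ∈ S := by
  induction h with
  | nil v => simp at hp
  | cons he h1 hw ih =>
    rcases List.mem_cons.mp hp with rfl | hp
    · exact he
    · exact ih hp

theorem Walk.append {S : Finset E} {l₁ l₂ : List (E × Bool)} {a b c : V}
    (h₁ : G.Walk S l₁ a b) (h₂ : G.Walk S l₂ b c) :
    G.Walk S (l₁ ++ l₂) a c := by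
  induction h₁ with
  | nil v => exact h₂
  | cons he h1 hw ih => exact Walk.cons he h1 (ih h₂)

theorem Walk.split {S : Finset E} {l₁ l₂ : List (E × Bool)} {a c : V}
    (h : G.Walk S (l₁ ++ l₂) a c) :
    ∃ b, G.Walk S l₁ a b ∧ G.Walk S l₂ b c := by
  induction l₁ generalizing a with
  | nil => exact ⟨a, Walk.nil a, h⟩
  | cons p l₁ ih =>
    cases h with
    | cons he h1 hw =>
      obtain ⟨b, hb1, hb2⟩ := ih hw
      exact ⟨b, Walk.cons he h1 hb1, hb2⟩

theorem verts_append (l₁ l₂ : List (E × Bool)) (a : V) :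
    G.verts (l₁ ++ l₂) a
      = G.verts l₁ a ++ l₂.map fun p => G.ends p.1 (!p.2) := by
  simp [verts]

theorem Walk.end_mem_verts {S : Finset E} {l a b} (h : G.Walk S l a b) :
    b ∈ G.verts l a := by
  induction h with
  | nil v => simp [verts]
  | cons he h1 hw ih =>
    simp only [verts, List.map_cons, List.mem_cons] at ih ⊢
    tauto

theorem Walk.end_mem_tail {S : Finset E} {l a b} (h : G.Walk S l a b)
    (hl : l ≠ []) : b ∈ l.map fun p => G.ends p.1 (!p.2) := by
  induction h with
  | nil v => simp at hl
  | @cons p l a c he h1 hw ih =>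
    cases l with
    | nil =>
      have := walk_nil_iff.mp hw
      simp [← this]
    | cons q l' =>
      have := ih (by simp)
      simp only [List.map_cons, List.mem_cons] at this ⊢
      tauto


theorem mem_suppV {S : Finset E} {v : V} :
    v ∈ G.suppV S ↔ ∃ e ∈ S, ∃ i : Bool, G.ends e i = v := by
  simp [suppV]

theorem ends_mem_suppV {S : Finset E} {f : E} (hf : f ∈ S) (i : Bool) :
    G.ends f i ∈ G.suppV S := mem_suppV.mpr ⟨f, hf, i, rfl⟩

theorem adjOn_symm {S : Finset E} {u v : V} (h : G.AdjOn S u v) :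
    G.AdjOn S v u := by
  obtain ⟨e, he, i, h1, h2⟩ := h
  exact ⟨e, he, !i, h2, by simpa using h1⟩

theorem adjOn_mono {S T : Finset E} (hST : S ⊆ T) {u v : V}
    (h : G.AdjOn S u v) : G.AdjOn T u v := by
  obtain ⟨e, he, i, h1, h2⟩ := h
  exact ⟨e, hST he, i, h1, h2⟩

theorem rtg_symm {S : Finset E} {u v : V}
    (h : Relation.ReflTransGen (G.AdjOn S) u v) :
    Relation.ReflTransGen (G.AdjOn S) v u :=
  by
  induction h with
  | refl => exact Relation.ReflTransGen.refl
  | tail _ hbc ih => exact Relation.ReflTransGen.head (adjOn_symm hbc) ih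

theorem rtg_mono {S T : Finset E} (hST : S ⊆ T) {u v : V}
    (h : Relation.ReflTransGen (G.AdjOn S) u v) :
    Relation.ReflTransGen (G.AdjOn T) u v :=
  by
  induction h with
  | refl => exact Relation.ReflTransGen.refl
  | tail _ hbc ih => exact ih.tail (adjOn_mono hST hbc)

theorem Walk.of_rtg {S : Finset E} {u v : V}
    (h : Relation.ReflTransGen (G.AdjOn S) u v) :
    ∃ l, G.Walk S l u v := by
  induction h with
  | refl => exact ⟨[], Walk.nil u⟩
  | tail hab hbc ih =>
    obtain ⟨l, hl⟩ := ih
    obtain ⟨e, he, i, h1, h2⟩ := hbc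
    exact ⟨l ++ [(e, i)], hl.append (Walk.cons he h1 (h2 ▸ Walk.nil _))⟩

theorem Walk.verts_conn {S : Finset E} {l a b} (h : G.Walk S l a b)
    {x : V} (hx : x ∈ G.verts l a) :
    Relation.ReflTransGen (G.AdjOn (edgesOf l)) a x := by
  induction h with
  | nil v =>
    rw [verts, List.map_nil, List.mem_singleton] at hx
    exact hx ▸ Relation.ReflTransGen.refl
  | @cons p l a c he h1 hw ih =>
    have hsub : edgesOf l ⊆ edgesOf (p :: l) := by
      intro x hx; simp [edgesOf] at hx ⊢; tauto
    have hadj : G.AdjOn (edgesOf (p :: l)) a (G.ends p.1 (!p.2)) :=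
      ⟨p.1, by simp [edgesOf], p.2, h1, rfl⟩
    rcases List.mem_cons.mp hx with rfl | hx
    · exact Relation.ReflTransGen.refl
    · exact Relation.ReflTransGen.head hadj
        (rtg_mono hsub (ih (by simpa [verts] using hx)))

theorem Walk.rtg {S : Finset E} {l a b} (h : G.Walk S l a b) :
    Relation.ReflTransGen (G.AdjOn S) a b := by
  have := h.verts_conn h.end_mem_verts
  refine rtg_mono ?_ this
  intro x hx
  simp only [edgesOf, List.mem_toFinset, List.mem_map] at hx
  obtain ⟨p, hp, rfl⟩ := hx
  exact h.edge_mem hp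

theorem valencyOn_eq_sum (S : Finset E) (v : V) :
    G.valencyOn S v = ∑ e ∈ S,
      ((if G.ends e false = v then 1 else 0) +
       (if G.ends e true = v then 1 else 0)) := by
  rw [valencyOn, Finset.card_filter, Fintype.sum_prod_type]
  have h2 : ∀ e : E, (∑ i : Bool, if e ∈ S ∧ G.ends e i = v then 1 else 0)
      = if e ∈ S then ((if G.ends e false = v then 1 else 0) +
        (if G.ends e true = v then 1 else 0)) else 0 := by
    intro e
    by_cases h : e ∈ S
    · simp only [h, true_and, if_true, Fintype.sum_bool]
      exact add_comm _ _
    · simp [h]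
  rw [Finset.sum_congr rfl fun e _ => h2 e, Finset.sum_ite_mem,
    Finset.univ_inter]

theorem valencyOn_eq_zero {S : Finset E} {v : V} (hv : v ∉ G.suppV S) :
    G.valencyOn S v = 0 := by
  rw [valencyOn_eq_sum]
  refine Finset.sum_eq_zero fun e he => ?_
  rw [mem_suppV] at hv
  push_neg at hv
  have h1 := hv e he false
  have h2 := hv e he true
  simp [h1, h2]

theorem valencyOn_union {S T : Finset E} (h : Disjoint S T) (v : V) :
    G.valencyOn (S ∪ T) v = G.valencyOn S v + G.valencyOn T v := by
  simp only [valencyOn_eq_sum]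
  exact Finset.sum_union h

theorem valencyOn_insert {S : Finset E} {f : E} (hf : f ∉ S) (v : V) :
    G.valencyOn (insert f S) v = G.valencyOn S v +
      ((if G.ends f false = v then 1 else 0) +
       (if G.ends f true = v then 1 else 0)) := by
  simp only [valencyOn_eq_sum]
  rw [Finset.sum_insert hf, add_comm]

theorem valencyOn_sdiff {S T : Finset E} (h : T ⊆ S) (v : V) :
    G.valencyOn S v = G.valencyOn T v + G.valencyOn (S \ T) v := by
  rw [← valencyOn_union (Finset.disjoint_sdiff), Finset.union_sdiff_of_subset h]

theorem suppV_insert (f : E) (S : Finset E) :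
    G.suppV (insert f S) = insert (G.ends f false)
      (insert (G.ends f true) (G.suppV S)) := by
  ext v
  simp only [Finset.mem_insert, mem_suppV]
  constructor
  · rintro ⟨e, he, i, rfl⟩
    rcases he with rfl | he
    · cases i <;> simp
    · exact Or.inr (Or.inr ⟨e, he, i, rfl⟩)
  · rintro (rfl | rfl | ⟨e, he, i, rfl⟩)
    · exact ⟨f, Or.inl rfl, false, rfl⟩
    · exact ⟨f, Or.inl rfl, true, rfl⟩
    · exact ⟨e, Or.inr he, i, rfl⟩

theorem signOf_union {S T : Finset E} (h : Disjoint S T) :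
    G.signOf (S ∪ T) = G.signOf S * G.signOf T := Finset.prod_union h


theorem suppV_empty : G.suppV (∅ : Finset E) = ∅ := by
  ext v; simp [mem_suppV]

theorem valencyOn_empty (v : V) : G.valencyOn (∅ : Finset E) v = 0 := by
  simp [valencyOn_eq_sum]

theorem suppV_mono {S T : Finset E} (h : S ⊆ T) : G.suppV S ⊆ G.suppV T := by
  intro v hv
  rw [mem_suppV] at hv ⊢
  obtain ⟨e, he, i, hi⟩ := hv
  exact ⟨e, h he, i, hi⟩

theorem connOn_of_base {P : Finset E} {a : V}
    (ha : ∀ x ∈ G.suppV P, Relation.ReflTransGen (G.AdjOn P) a x) :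
    G.ConnOn P := fun u hu v hv => (rtg_symm (ha u hu)).trans (ha v hv)

theorem connOn_mono_supp {P Q : Finset E} (hPQ : P ⊆ Q)
    (hsupp : G.suppV Q = G.suppV P) (h : G.ConnOn P) : G.ConnOn Q := by
  intro u hu v hv
  rw [hsupp] at hu hv
  exact rtg_mono hPQ (h u hu v hv)

theorem pair_swap (f : E) (i : Bool) (w : V) :
    ((if G.ends f false = w then 1 else 0) +
      (if G.ends f true = w then 1 else 0) : ℕ)
    = (if G.ends f i = w then 1 else 0) +
      (if G.ends f (!i) = w then 1 else 0) := by
  cases i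
  · rfl
  · exact add_comm _ _

theorem suppV_insert' (f : E) (i : Bool) (S : Finset E) :
    G.suppV (insert f S) = insert (G.ends f i)
      (insert (G.ends f (!i)) (G.suppV S)) := by
  rw [suppV_insert]
  cases i
  · rfl
  · exact Finset.insert_comm _ _ _

theorem edgesOf_nil : edgesOf (E := E) [] = ∅ := rfl

theorem edgesOf_cons (p : E × Bool) (l : List (E × Bool)) :
    edgesOf (p :: l) = insert p.1 (edgesOf l) := by
  simp [edgesOf]

theorem verts_cons (p : E × Bool) (l : List (E × Bool)) (a : V) :
    G.verts (p :: l) a = a :: G.verts l (G.ends p.1 (!p.2)) := by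
  simp [verts]

theorem mem_verts_head (l : List (E × Bool)) (a : V) : a ∈ G.verts l a :=
  List.mem_cons_self

/-- A walk with no repeated vertices spans a path. -/
theorem Walk.nodup_path {S : Finset E} {l : List (E × Bool)} {a b : V}
    (h : G.Walk S l a b) (hnd : (G.verts l a).Nodup) (hl : l ≠ []) :
    G.IsPathOn (edgesOf l) a b ∧
      G.suppV (edgesOf l) = (G.verts l a).toFinset := by
  induction h with
  | nil v => exact absurd rfl hl
  | @cons p l a c he h1 hw ih =>
    rw [verts_cons] at hnd
    have hnd' : (G.verts l (G.ends p.1 (!p.2))).Nodup := hnd.of_cons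
    have hna : a ∉ G.verts l (G.ends p.1 (!p.2)) := (List.nodup_cons.mp hnd).1
    have hnaa' : a ≠ G.ends p.1 (!p.2) := by
      intro hcon; exact hna (hcon ▸ mem_verts_head l _)
    rcases eq_or_ne l [] with rfl | hl'
    · -- base case : single edge
      have hb : G.ends p.1 (!p.2) = c := walk_nil_iff.mp hw
      subst hb
      have hsupp : G.suppV (edgesOf [p]) = {a, G.ends p.1 (!p.2)} := by
        rw [edgesOf_cons, edgesOf_nil, suppV_insert' p.1 p.2, suppV_empty, h1]
        rfl
      have hval : ∀ w, G.valencyOn (edgesOf [p]) w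
          = (if a = w then 1 else 0) +
            (if G.ends p.1 (!p.2) = w then 1 else 0) := by
        intro w
        rw [edgesOf_cons, edgesOf_nil,
          valencyOn_insert (Finset.notMem_empty p.1), valencyOn_empty,
          pair_swap p.1 p.2, h1, zero_add]
      have hmem1 : a ∈ G.suppV (edgesOf [p]) := by rw [hsupp]; simp
      have hmem2 : G.ends p.1 (!p.2) ∈ G.suppV (edgesOf [p]) := by
        rw [hsupp]; simp
      have hadj : G.AdjOn (edgesOf [p]) a (G.ends p.1 (!p.2)) :=
        ⟨p.1, by simp [edgesOf], p.2, h1, rfl⟩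
      refine ⟨⟨hnaa', ?_, hmem1, hmem2, ?_, ?_, ?_⟩, ?_⟩
      · refine connOn_of_base (a := a) fun x hx => ?_
        rw [hsupp, Finset.mem_insert, Finset.mem_singleton] at hx
        rcases hx with rfl | rfl
        · exact Relation.ReflTransGen.refl
        · exact Relation.ReflTransGen.single hadj
      · rw [hval]; simp [Ne.symm hnaa']
      · rw [hval]; simp [hnaa']
      · intro w hw hw1 hw2
        rw [hsupp, Finset.mem_insert, Finset.mem_singleton] at hw
        rcases hw with rfl | rfl
        · exact absurd rfl hw1
        · exact absurd rfl hw2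
      · rw [hsupp, verts_cons]; simp [verts]
    · -- inductive case
      obtain ⟨ihp, ihs⟩ := ih hnd' hl'
      obtain ⟨ihne, ihconn, ihmu, ihmv, ihvu, ihvv, ihint⟩ := ihp
      have hp1 : p.1 ∉ edgesOf l := by
        intro hmem
        have : G.ends p.1 p.2 ∈ G.suppV (edgesOf l) := ends_mem_suppV hmem p.2
        rw [h1, ihs, List.mem_toFinset] at this
        exact hna this
      have hedges : edgesOf (p :: l) = insert p.1 (edgesOf l) :=
        edgesOf_cons p l
      have hval : ∀ w, G.valencyOn (edgesOf (p :: l)) w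
          = G.valencyOn (edgesOf l) w + ((if a = w then 1 else 0) +
            (if G.ends p.1 (!p.2) = w then 1 else 0)) := by
        intro w
        rw [hedges, valencyOn_insert hp1, pair_swap p.1 p.2, h1]
      have hsupp : G.suppV (edgesOf (p :: l))
          = insert a (insert (G.ends p.1 (!p.2)) (G.suppV (edgesOf l))) := by
        rw [hedges, suppV_insert' p.1 p.2, h1]
      have hnac : a ≠ c := fun hcon =>
        hna (hcon ▸ hw.end_mem_verts)
      have hvala : G.valencyOn (edgesOf l) a = 0 := by
        refine valencyOn_eq_zero ?_
        rw [ihs, List.mem_toFinset]; exact hna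
      have hsupp2 : G.suppV (edgesOf (p :: l))
          = insert a ((G.verts l (G.ends p.1 (!p.2))).toFinset) := by
        rw [hsupp, ihs, Finset.insert_eq_self.mpr
          (List.mem_toFinset.mpr (mem_verts_head l _))]
      refine ⟨⟨hnac, ?_, ?_, ?_, ?_, ?_, ?_⟩, ?_⟩
      · -- connectivity
        refine connOn_of_base (a := a) fun x hx => ?_
        have hadj : G.AdjOn (edgesOf (p :: l)) a (G.ends p.1 (!p.2)) :=
          ⟨p.1, by rw [hedges]; exact Finset.mem_insert_self _ _, p.2, h1, rfl⟩
        rw [hsupp, Finset.mem_insert, Finset.mem_insert] at hx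
        rcases hx with rfl | rfl | hx
        · exact Relation.ReflTransGen.refl
        · exact Relation.ReflTransGen.single hadj
        · refine Relation.ReflTransGen.head hadj (rtg_mono ?_
            (ihconn _ ihmu x hx))
          rw [hedges]; exact Finset.subset_insert _ _
      · rw [hsupp]; exact Finset.mem_insert_self _ _
      · rw [hsupp]
        exact Finset.mem_insert_of_mem (Finset.mem_insert_of_mem ihmv)
      · rw [hval, hvala]
        simp [Ne.symm hnaa']
      · rw [hval, ihvv]
        simp [hnac, ihne]
      · intro w hw hw1 hw2
        rw [hsupp, Finset.mem_insert, Finset.mem_insert] at hw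
        rcases hw with rfl | rfl | hw
        · exact absurd rfl hw1
        · rw [hval, ihvu]
          simp [hnaa']
        · by_cases hwa' : w = G.ends p.1 (!p.2)
          · subst hwa'
            rw [hval, ihvu]
            simp [hnaa']
          · rw [hval, ihint w hw hwa' hw2]
            have h3 : a ≠ w := by
              intro hcon; subst hcon
              rw [ihs, List.mem_toFinset] at hw
              exact hna hw
            simp [h3, Ne.symm hwa']
      · rw [hsupp2, verts_cons]
        simp

theorem Walk.split_at_vertex {S : Finset E} {l : List (E × Bool)} {a b w : V}
    (h : G.Walk S l a b) (hw : w ∈ G.verts l a) :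
    ∃ l₁ l₂, l = l₁ ++ l₂ ∧ G.Walk S l₁ a w ∧ G.Walk S l₂ w b := by
  induction h with
  | nil v =>
    rw [verts, List.map_nil, List.mem_singleton] at hw
    exact ⟨[], [], rfl, walk_nil_iff.mpr hw.symm, walk_nil_iff.mpr hw⟩
  | @cons p l a c he h1 hwk ih =>
    rw [verts_cons, List.mem_cons] at hw
    rcases hw with rfl | hw
    · exact ⟨[], p :: l, rfl, Walk.nil w, Walk.cons he h1 hwk⟩
    · obtain ⟨l₁, l₂, rfl, hw1, hw2⟩ := ih hw
      exact ⟨p :: l₁, l₂, rfl, Walk.cons he h1 hw1, hw2⟩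

theorem Walk.step_decomp {S : Finset E} {l : List (E × Bool)} {a b : V}
    (h : G.Walk S l a b) {p : E × Bool} (hp : p ∈ l) :
    ∃ l₁ l₂, l = l₁ ++ p :: l₂ ∧ G.Walk S l₁ a (G.ends p.1 p.2) ∧
      G.Walk S l₂ (G.ends p.1 (!p.2)) b := by
  induction h with
  | nil v => simp at hp
  | @cons q l a c he h1 hwk ih =>
    rcases List.mem_cons.mp hp with rfl | hp
    · exact ⟨[], l, rfl, walk_nil_iff.mpr h1.symm, hwk⟩
    · obtain ⟨l₁, l₂, rfl, hw1, hw2⟩ := ih hp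
      exact ⟨q :: l₁, l₂, rfl, Walk.cons he h1 hw1, hw2⟩

theorem Walk.shorten {S : Finset E} {l : List (E × Bool)} {a b : V}
    (h : G.Walk S l a b) (hnd : ¬ (G.verts l a).Nodup) :
    ∃ l', G.Walk S l' a b ∧ l'.length < l.length := by
  induction h with
  | nil v =>
    exact absurd (by simp [verts]) hnd
  | @cons p l a c he h1 hwk ih =>
    rw [verts_cons, List.nodup_cons] at hnd
    push_neg at hnd
    by_cases hmem : a ∈ G.verts l (G.ends p.1 (!p.2))
    · obtain ⟨l₁, l₂, rfl, hw1, hw2⟩ := hwk.split_at_vertex hmem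
      refine ⟨l₂, hw2, ?_⟩
      simp only [List.length_cons, List.length_append]
      omega
    · obtain ⟨l', hw', hlen⟩ := ih (fun hcon => (hnd hmem) hcon)
      exact ⟨p :: l', Walk.cons he h1 hw', by simpa using hlen⟩

/-- A minimal walk between two vertex predicates: no repeated vertices,
never stepping into `PA`, never stepping out of `PB`. -/
theorem exists_min_walk {S : Finset E} {PA PB : V → Prop} {a b : V}
    (hPA : PA a) (hPB : PB b) {l₀ : List (E × Bool)}
    (h₀ : G.Walk S l₀ a b) :
    ∃ (l : List (E × Bool)) (a' b' : V), G.Walk S l a' b' ∧ PA a' ∧ PB b' ∧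
      (G.verts l a').Nodup ∧
      (∀ p ∈ l, ¬ PA (G.ends p.1 (!p.2))) ∧
      (∀ p ∈ l, ¬ PB (G.ends p.1 p.2)) := by
  classical
  set Pn : ℕ → Prop := fun n => ∃ (l : List (E × Bool)) (a' b' : V),
    G.Walk S l a' b' ∧ PA a' ∧ PB b' ∧ l.length = n with hPn
  have hex : ∃ n, Pn n := ⟨l₀.length, l₀, a, b, h₀, hPA, hPB, rfl⟩
  obtain ⟨l, a', b', hw, ha, hb, hlen⟩ := Nat.find_spec hex
  refine ⟨l, a', b', hw, ha, hb, ?_, ?_, ?_⟩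
  · by_contra hnd
    obtain ⟨l', hw', hlt⟩ := hw.shorten hnd
    exact Nat.find_min hex (hlen ▸ hlt) ⟨l', a', b', hw', ha, hb, rfl⟩
  · intro p hp hcon
    obtain ⟨l₁, l₂, rfl, hw1, hw2⟩ := hw.step_decomp hp
    refine Nat.find_min hex (m := l₂.length) ?_
      ⟨l₂, _, b', hw2, hcon, hb, rfl⟩
    rw [← hlen]
    simp only [List.length_append, List.length_cons]
    omega
  · intro p hp hcon
    obtain ⟨l₁, l₂, rfl, hw1, hw2⟩ := hw.step_decomp hp
    refine Nat.find_min hex (m := l₁.length) ?_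
      ⟨l₁, a', _, hw1, ha, hcon, rfl⟩
    rw [← hlen]
    simp only [List.length_append, List.length_cons]
    omega

theorem signOf_insert {f : E} {P : Finset E} (hf : f ∉ P) :
    G.signOf (insert f P) = G.sign f * G.signOf P := Finset.prod_insert hf

theorem loop_circuit {f : E} (hloop : G.ends f false = G.ends f true) :
    G.IsCircuit {f} := by
  have hsupp : G.suppV {f} = {G.ends f false} := by
    ext w
    rw [mem_suppV, Finset.mem_singleton]
    constructor
    · rintro ⟨e, he, i, rfl⟩
      rw [Finset.mem_singleton] at he
      subst he
      cases i
      · rfl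
      · exact hloop.symm
    · rintro rfl
      exact ⟨f, Finset.mem_singleton_self f, false, rfl⟩
  refine ⟨Finset.singleton_nonempty f, ?_, ?_⟩
  · intro x hx y hy
    rw [hsupp, Finset.mem_singleton] at hx hy
    rw [hx, hy]
  · intro w hw
    rw [hsupp, Finset.mem_singleton] at hw
    subst hw
    have : ({f} : Finset E) = insert f ∅ := rfl
    rw [this, valencyOn_insert (Finset.notMem_empty f), valencyOn_empty]
    simp [← hloop]

theorem circuit_insert_path {P : Finset E} {u v : V} (hP : G.IsPathOn P u v)
    {f : E} (hf : f ∉ P) {i : Bool} (h1 : G.ends f i = u)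
    (h2 : G.ends f (!i) = v) :
    G.IsCircuit (insert f P) ∧ G.suppV (insert f P) = G.suppV P := by
  obtain ⟨hne, hconn, hmu, hmv, hvu, hvv, hint⟩ := hP
  have hsupp : G.suppV (insert f P) = G.suppV P := by
    rw [suppV_insert' f i, h1, h2, Finset.insert_eq_self.mpr hmv,
      Finset.insert_eq_self.mpr hmu]
  have hval : ∀ w, G.valencyOn (insert f P) w = G.valencyOn P w +
      ((if u = w then 1 else 0) + (if v = w then 1 else 0)) := by
    intro w
    rw [valencyOn_insert hf, pair_swap f i, h1, h2]
  refine ⟨⟨Finset.insert_nonempty f P, ?_, ?_⟩, hsupp⟩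
  · exact connOn_mono_supp (Finset.subset_insert f P) hsupp hconn
  · intro w hw
    rw [hsupp] at hw
    rw [hval]
    by_cases hwu : w = u
    · subst hwu
      rw [hvu]
      simp [Ne.symm hne]
    · by_cases hwv : w = v
      · subst hwv
        rw [hvv]
        simp [hne]
      · rw [hint w hw hwu hwv]
        simp [Ne.symm hwu, Ne.symm hwv]

theorem IsCircuit.even_valency {C : Finset E} (h : G.IsCircuit C) (v : V) :
    Even (G.valencyOn C v) := by
  by_cases hv : v ∈ G.suppV C
  · rw [h.2.2 v hv]
    exact even_two
  · rw [valencyOn_eq_zero hv]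
    exact Even.zero

theorem IsCircuit.nonempty_supp {C : Finset E} (h : G.IsCircuit C) :
    (G.suppV C).Nonempty := by
  obtain ⟨f, hf⟩ := h.1
  exact ⟨G.ends f false, ends_mem_suppV hf false⟩

theorem walk_single {S : Finset E} {p : E × Bool} {m b : V}
    (h : G.Walk S [p] m b) :
    p.1 ∈ S ∧ G.ends p.1 p.2 = m ∧ G.ends p.1 (!p.2) = b := by
  cases h with
  | cons he h1 hw => exact ⟨he, h1, walk_nil_iff.mp hw⟩

theorem Walk.edgesOf_subset {S : Finset E} {l : List (E × Bool)} {a b : V}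
    (h : G.Walk S l a b) : edgesOf l ⊆ S := by
  intro x hx
  simp only [edgesOf, List.mem_toFinset, List.mem_map] at hx
  obtain ⟨pa, hpa, rfl⟩ := hx
  exact h.edge_mem hpa

theorem verts_length (l : List (E × Bool)) (a : V) :
    (G.verts l a).length = l.length + 1 := by
  simp [verts, Nat.add_comm]

theorem exists_circuit_of_even {D : Finset E} (hne : D.Nonempty)
    (heven : ∀ v, Even (G.valencyOn D v)) :
    ∃ C, C ⊆ D ∧ G.IsCircuit C := by
  classical
  by_cases hloop : ∃ f ∈ D, G.ends f false = G.ends f true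
  · obtain ⟨f, hf, hfl⟩ := hloop
    exact ⟨{f}, Finset.singleton_subset_iff.mpr hf, loop_circuit hfl⟩
  push_neg at hloop
  obtain ⟨f₀, hf₀⟩ := hne
  set Pn : ℕ → Prop := fun n => ∃ (l : List (E × Bool)) (a b : V),
    G.Walk D l a b ∧ (G.verts l a).Nodup ∧ l.length = n with hPn
  have hbound : ∀ n, Pn n → n < Fintype.card V := by
    rintro n ⟨l, a, b, hw, hnd, rfl⟩
    have := hnd.length_le_card
    rw [verts_length] at this
    omega
  have hP1 : Pn 1 := by
    refine ⟨[(f₀, false)], G.ends f₀ false, G.ends f₀ true,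
      Walk.cons hf₀ rfl ?_, ?_, rfl⟩
    · exact walk_nil_iff.mpr rfl
    · simp [verts, hloop f₀ hf₀]
  set N := Nat.findGreatest Pn (Fintype.card V) with hN
  have hN1 : 1 ≤ N :=
    Nat.le_findGreatest (le_of_lt (hbound 1 hP1)) hP1
  have hPN : Pn N := Nat.findGreatest_spec (le_of_lt (hbound 1 hP1)) hP1
  obtain ⟨l, a, b, hw, hnd, hlen⟩ := hPN
  have hlne : l ≠ [] := by
    intro hcon
    rw [hcon] at hlen
    simp at hlen
    omega
  rcases (List.eq_nil_or_concat l) with rfl | ⟨l₁, p, rfl⟩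
  · exact absurd rfl hlne
  rw [List.concat_eq_append] at hw hnd hlen
  obtain ⟨m, hw1, hw2⟩ := Walk.split (l₁ := l₁) (l₂ := [p]) hw
  obtain ⟨hpD, hpm, hpb⟩ := walk_single hw2
  set F := Finset.univ.filter
    (fun q : E × Bool => q.1 ∈ D ∧ G.ends q.1 q.2 = b) with hF
  have hFcard : F.card = G.valencyOn D b := rfl
  have hmemF : (p.1, !p.2) ∈ F := by
    rw [hF, Finset.mem_filter]
    exact ⟨Finset.mem_univ _, hpD, hpb⟩
  have hcard2 : 1 < F.card := by
    obtain ⟨k, hk⟩ := heven b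
    rw [← hFcard] at hk
    have : 0 < F.card := Finset.card_pos.mpr ⟨_, hmemF⟩
    omega
  obtain ⟨q, hqF, hqne⟩ := Finset.exists_mem_ne hcard2 (p.1, !p.2)
  rw [hF, Finset.mem_filter] at hqF
  obtain ⟨-, hqD, hqb⟩ := hqF
  have hwb : G.ends q.1 (!q.2) ≠ b := by
    rw [← hqb]
    cases hqi : q.2
    · exact Ne.symm (hloop q.1 hqD)
    · exact hloop q.1 hqD
  by_cases hmem : G.ends q.1 (!q.2) ∈ G.verts (l₁ ++ [p]) a
  · -- close up a cycle
    obtain ⟨m₁, m₂, heq, hwm1, hwm2⟩ := hw.split_at_vertex hmem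
    have hndm : (G.verts (m₁ ++ m₂) a).Nodup := heq ▸ hnd
    rw [verts_append] at hndm
    have hndL : (G.verts m₁ a).Nodup := hndm.of_append_left
    have hndR : (m₂.map fun r => G.ends r.1 (!r.2)).Nodup :=
      hndm.of_append_right
    have hdisj := List.disjoint_of_nodup_append hndm
    have hwv : G.ends q.1 (!q.2) ∈ G.verts m₁ a := hwm1.end_mem_verts
    have hnd2 : (G.verts m₂ (G.ends q.1 (!q.2))).Nodup := by
      rw [verts]
      exact List.nodup_cons.mpr ⟨fun hcon => hdisj hwv hcon, hndR⟩
    have hm2ne : m₂ ≠ [] := by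
      intro hcon
      rw [hcon] at hwm2
      exact hwb (walk_nil_iff.mp hwm2)
    have hqnotin : q.1 ∉ edgesOf m₂ := by
      intro hcon
      simp only [edgesOf, List.mem_toFinset, List.mem_map] at hcon
      obtain ⟨r, hrm, hr1⟩ := hcon
      obtain ⟨n₁, n₂, heq2, hwn1, hwn2⟩ := hwm2.step_decomp hrm
      have hndm2 : (G.verts (n₁ ++ r :: n₂) (G.ends q.1 (!q.2))).Nodup :=
        heq2 ▸ hnd2
      rw [verts_append] at hndm2
      have hdisj2 := List.disjoint_of_nodup_append hndm2
      rcases Bool.eq_or_eq_not r.2 q.2 with hr2 | hr2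
      · -- step into b in the middle
        have hrb : G.ends r.1 r.2 = b := by rw [hr1, hr2, hqb]
        have hb1 : b ∈ G.verts n₁ (G.ends q.1 (!q.2)) :=
          hrb ▸ hwn1.end_mem_verts
        have hwalk2 : G.Walk D (r :: n₂) b b :=
          Walk.cons (hr1 ▸ hqD) hrb hwn2
        have hb2 : b ∈ (r :: n₂).map fun s => G.ends s.1 (!s.2) :=
          hwalk2.end_mem_tail (by simp)
        exact hdisj2 hb1 hb2
      · -- step out of the start vertex
        have hrw : G.ends r.1 r.2 = G.ends q.1 (!q.2) := by rw [hr1, hr2]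
        have hrb : G.ends r.1 (!r.2) = b := by
          rw [hr1, hr2, Bool.not_not, hqb]
        have hn₂ : n₂ = [] := by
          rcases eq_or_ne n₂ [] with h | h
          · exact h
          · exfalso
            have hb2 : b ∈ n₂.map fun s => G.ends s.1 (!s.2) :=
              hwn2.end_mem_tail h
            have : ((r :: n₂).map fun s => G.ends s.1 (!s.2)).Nodup :=
              hndm2.of_append_right
            rw [List.map_cons, hrb, List.nodup_cons] at this
            exact this.1 hb2
        have hn₁ : n₁ = [] := by
          rcases eq_or_ne n₁ [] with h | h
          · exact h
          · exfalso
            have hw2' : G.Walk D n₁ (G.ends q.1 (!q.2))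
                (G.ends q.1 (!q.2)) := hrw ▸ hwn1
            have hx : G.ends q.1 (!q.2) ∈
                n₁.map fun s => G.ends s.1 (!s.2) := hw2'.end_mem_tail h
            have : (G.verts n₁ (G.ends q.1 (!q.2))).Nodup :=
              hndm2.of_append_left
            rw [verts, List.nodup_cons] at this
            exact this.1 hx
        subst hn₁ hn₂
        simp only [List.nil_append] at heq2
        -- m₂ = [r], and r is the last step p
        have hlast : r = p := by
          have h1 : (m₁ ++ m₂).getLast? = some p := by
            rw [← heq, List.getLast?_concat]
          rw [heq2] at h1
          rw [List.getLast?_concat] at h1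
          exact Option.some_injective _ h1
        apply hqne
        have h2 : q.2 = !p.2 := by
          rw [← hlast, hr2, Bool.not_not]
        have h1' : q.1 = p.1 := by rw [← hr1, hlast]
        rw [show q = (q.1, q.2) from rfl, h1', h2]
    -- now build the circuit
    obtain ⟨hpath, hsupp⟩ := hwm2.nodup_path hnd2 hm2ne
    have hclose := G.circuit_insert_path hpath hqnotin
      (i := !q.2) rfl (by rw [Bool.not_not]; exact hqb)
    refine ⟨insert q.1 (edgesOf m₂), ?_, hclose.1⟩
    intro x hx
    rcases Finset.mem_insert.mp hx with rfl | hx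
    · exact hqD
    · exact hwm2.edgesOf_subset hx
  · -- extend the walk : contradiction with maximality
    exfalso
    have hwext : G.Walk D ((l₁ ++ [p]) ++ [(q.1, q.2)]) a
        (G.ends q.1 (!q.2)) :=
      hw.append (Walk.cons hqD hqb (walk_nil_iff.mpr rfl))
    have hndext : (G.verts ((l₁ ++ [p]) ++ [(q.1, q.2)]) a).Nodup := by
      rw [verts_append]
      simp only [List.map_cons, List.map_nil]
      refine List.Nodup.append hnd (List.nodup_singleton _) ?_
      intro x hx hx'
      rw [List.mem_singleton] at hx'
      exact hmem (hx' ▸ hx)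
    have hPN1 : Pn (N + 1) := by
      refine ⟨_, a, _, hwext, hndext, ?_⟩
      simp [← hlen]
    exact Nat.findGreatest_is_greatest (Nat.lt_succ_self N)
      (le_of_lt (hbound _ hPN1)) hPN1

theorem even_valencyOn_sdiff {C D : Finset E} (hCD : C ⊆ D)
    (hD : ∀ v, Even (G.valencyOn D v)) (hC : ∀ v, Even (G.valencyOn C v))
    (v : V) : Even (G.valencyOn (D \ C) v) := by
  have h := G.valencyOn_sdiff hCD v
  have h1 := hD v
  have h2 := hC v
  rw [h, Nat.even_add] at h1
  exact h1.mp h2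

theorem signOf_sdiff {C D : Finset E} (hCD : C ⊆ D) :
    G.signOf D = G.signOf C * G.signOf (D \ C) := by
  rw [← signOf_union Finset.disjoint_sdiff, Finset.union_sdiff_of_subset hCD]

theorem exists_circuit_through {D : Finset E}
    (heven : ∀ v, Even (G.valencyOn D v)) {e : E} (he : e ∈ D) :
    ∃ C, C ⊆ D ∧ G.IsCircuit C ∧ e ∈ C := by
  induction D using Finset.strongInductionOn with
  | _ D ih =>
  obtain ⟨C, hCD, hC⟩ := G.exists_circuit_of_even ⟨e, he⟩ heven
  by_cases heC : e ∈ C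
  · exact ⟨C, hCD, hC, heC⟩
  · obtain ⟨C', hC'sub, hC', heC'⟩ :=
      ih (D \ C) (Finset.sdiff_ssubset hCD hC.1)
        (G.even_valencyOn_sdiff hCD heven hC.even_valency)
        (Finset.mem_sdiff.mpr ⟨he, heC⟩)
    exact ⟨C', hC'sub.trans (Finset.sdiff_subset), hC', heC'⟩

theorem exists_unbalanced_circuit_of_sign {D : Finset E}
    (heven : ∀ v, Even (G.valencyOn D v)) (hsign : G.signOf D = -1) :
    ∃ C, C ⊆ D ∧ G.IsCircuit C ∧ G.signOf C = -1 := by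
  induction D using Finset.strongInductionOn with
  | _ D ih =>
  have hDne : D.Nonempty := by
    rcases D.eq_empty_or_nonempty with rfl | h
    · rw [signOf, Finset.prod_empty] at hsign
      exact absurd hsign (by decide)
    · exact h
  obtain ⟨C, hCD, hC⟩ := G.exists_circuit_of_even hDne heven
  rcases Int.units_eq_one_or (G.signOf C) with hs | hs
  · have hsd : G.signOf (D \ C) = -1 := by
      have := G.signOf_sdiff hCD
      rw [hs, one_mul] at this
      rw [← this, hsign]
    obtain ⟨C', hC'sub, hC', hs'⟩ :=
      ih (D \ C) (Finset.sdiff_ssubset hCD hC.1)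
        (G.even_valencyOn_sdiff hCD heven hC.even_valency) hsd
    exact ⟨C', hC'sub.trans (Finset.sdiff_subset), hC', hs'⟩
  · exact ⟨C, hCD, hC, hs⟩

/-- The structure theorem for even sets of sign `+1`. -/
theorem even_decomp {D : Finset E} (heven : ∀ v, Even (G.valencyOn D v))
    (hsign : G.signOf D = 1) {e : E} (he : e ∈ D) :
    (∃ C, C ⊆ D ∧ G.IsCircuit C ∧ e ∈ C ∧ G.signOf C = 1) ∨
    (∃ C₁ C₂, C₁ ⊆ D ∧ C₂ ⊆ D ∧ G.IsCircuit C₁ ∧ G.IsCircuit C₂ ∧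
      Disjoint C₁ C₂ ∧ e ∈ C₁ ∧ G.signOf C₁ = -1 ∧ G.signOf C₂ = -1) := by
  obtain ⟨C, hCD, hC, heC⟩ := G.exists_circuit_through heven he
  rcases Int.units_eq_one_or (G.signOf C) with hs | hs
  · exact Or.inl ⟨C, hCD, hC, heC, hs⟩
  · have hsd : G.signOf (D \ C) = -1 := by
      have := G.signOf_sdiff hCD
      rw [hs] at this
      have h2 : (-1 : ℤˣ) * G.signOf D = G.signOf (D \ C) := by
        rw [this, ← mul_assoc, Int.units_mul_self, one_mul]
      rw [← h2, hsign, mul_one]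
    obtain ⟨C₂, hC₂sub, hC₂, hs₂⟩ := G.exists_unbalanced_circuit_of_sign
      (G.even_valencyOn_sdiff hCD heven hC.even_valency) hsd
    refine Or.inr ⟨C, C₂, hCD, hC₂sub.trans Finset.sdiff_subset, hC, hC₂,
      ?_, heC, hs, hs₂⟩
    exact Finset.disjoint_sdiff.mono_right hC₂sub
    -- disjoint C (D \ C) and C₂ ⊆ D \ C

theorem mem_edgesOf {l : List (E × Bool)} {x : E} :
    x ∈ edgesOf l ↔ ∃ p ∈ l, p.1 = x := by
  simp [edgesOf]

theorem Walk.src_mem_verts {S : Finset E} {l : List (E × Bool)} {a b : V}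
    (h : G.Walk S l a b) {p : E × Bool} (hp : p ∈ l) :
    G.ends p.1 p.2 ∈ G.verts l a := by
  obtain ⟨l₁, l₂, rfl, hw1, hw2⟩ := h.step_decomp hp
  rw [verts_append]
  exact List.mem_append_left _ hw1.end_mem_verts

theorem Walk.tgt_mem_verts {S : Finset E} {l : List (E × Bool)} {a b : V}
    (h : G.Walk S l a b) {p : E × Bool} (hp : p ∈ l) :
    G.ends p.1 (!p.2) ∈ G.verts l a :=
  List.mem_cons_of_mem _ (List.mem_map_of_mem hp)

/-- Joining two vertex-disjoint subgraphs by a path avoiding their edges. -/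
theorem exists_join_path {S C₁ C₂ : Finset E}
    (hdisj : Disjoint (G.suppV C₁) (G.suppV C₂))
    (hconn : ∀ x y : V, Relation.ReflTransGen (G.AdjOn S) x y)
    (h1 : (G.suppV C₁).Nonempty) (h2 : (G.suppV C₂).Nonempty) :
    ∃ (P : Finset E) (u v : V), G.IsPathOn P u v ∧ u ∈ G.suppV C₁ ∧
      v ∈ G.suppV C₂ ∧ Disjoint P (C₁ ∪ C₂) := by
  obtain ⟨a, ha⟩ := h1
  obtain ⟨b, hb⟩ := h2
  obtain ⟨l₀, hl₀⟩ := Walk.of_rtg (hconn a b)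
  obtain ⟨l, a', b', hw, ha', hb', hnd, htgt, hsrc⟩ :=
    G.exists_min_walk (PA := (· ∈ G.suppV C₁)) (PB := (· ∈ G.suppV C₂))
      ha hb hl₀
  have hlne : l ≠ [] := by
    rintro rfl
    have := walk_nil_iff.mp hw
    subst this
    exact Finset.disjoint_left.mp hdisj ha' hb'
  obtain ⟨hpath, -⟩ := hw.nodup_path hnd hlne
  refine ⟨edgesOf l, a', b', hpath, ha', hb', ?_⟩
  rw [Finset.disjoint_left]
  intro x hx hxC
  obtain ⟨p, hp, rfl⟩ := mem_edgesOf.mp hx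
  rcases Finset.mem_union.mp hxC with hxC | hxC
  · exact htgt p hp (ends_mem_suppV hxC (!p.2))
  · exact hsrc p hp (ends_mem_suppV hxC p.2)

/-- Main lemma: if `e` lies on some unbalanced circuit, then it lies on a
balanced circuit or a weak unbalanced bicircuit. -/
theorem main_common (hconn : G.Connected)
    (hcomp : ∀ f : E, G.NoBalancedComponentAvoiding f) {C : Finset E} {e : E}
    (hC : G.IsCircuit C) (hsC : G.signOf C = -1) (heC : e ∈ C) :
    (∃ S : Finset E, G.IsBalancedCircuit S ∧ e ∈ S) ∨
    (∃ T : Finset E, G.IsWeakBicircuit T ∧ e ∈ T) := by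
  obtain ⟨C', hC', hsC', heC', -⟩ := hcomp e (G.ends e false)
  set D := (C \ C') ∪ (C' \ C) with hD
  have hDisj : Disjoint (C \ C') (C' \ C) := by
    rw [Finset.disjoint_left]
    intro x h1 h2
    exact (Finset.mem_sdiff.mp h1).2 (Finset.mem_sdiff.mp h2).1
  have heD : e ∈ D := Finset.mem_union_left _
    (Finset.mem_sdiff.mpr ⟨heC, heC'⟩)
  have e1 : ∀ v, G.valencyOn C v
      = G.valencyOn (C ∩ C') v + G.valencyOn (C \ C') v := by
    intro v
    have := G.valencyOn_sdiff (Finset.inter_subset_left (s₁ := C) (s₂ := C')) v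
    rwa [Finset.sdiff_inter_self_left] at this
  have e2 : ∀ v, G.valencyOn C' v
      = G.valencyOn (C ∩ C') v + G.valencyOn (C' \ C) v := by
    intro v
    have := G.valencyOn_sdiff
      (Finset.inter_subset_left (s₁ := C') (s₂ := C)) v
    rwa [Finset.sdiff_inter_self_left, Finset.inter_comm] at this
  have heven : ∀ v, Even (G.valencyOn D v) := by
    intro v
    have h1 := hC.even_valency v
    have h2 := hC'.even_valency v
    have h3 : G.valencyOn D v
        = G.valencyOn (C \ C') v + G.valencyOn (C' \ C) v :=
      G.valencyOn_union hDisj v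
    rw [Nat.even_iff] at h1 h2 ⊢
    have := e1 v
    have := e2 v
    omega
  have hsD : G.signOf D = 1 := by
    have u1 : G.signOf C = G.signOf (C ∩ C') * G.signOf (C \ C') := by
      have := G.signOf_sdiff (Finset.inter_subset_left (s₁ := C) (s₂ := C'))
      rwa [Finset.sdiff_inter_self_left] at this
    have u2 : G.signOf C' = G.signOf (C ∩ C') * G.signOf (C' \ C) := by
      have := G.signOf_sdiff (Finset.inter_subset_left (s₁ := C') (s₂ := C))
      rwa [Finset.sdiff_inter_self_left, Finset.inter_comm] at this
    have u3 : G.signOf C * G.signOf C' = G.signOf D := by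
      rw [u1, u2, mul_mul_mul_comm, Int.units_mul_self, one_mul, hD,
        signOf_union hDisj]
    rw [hsC, hsC'] at u3
    rw [← u3]
    decide
  rcases G.even_decomp heven hsD heD with
    ⟨C₀, -, hC₀, heC₀, hs₀⟩ | ⟨C₁, C₂, -, -, h₁, h₂, hdisj', he₁, hs₁, hs₂⟩
  · exact Or.inl ⟨C₀, ⟨hC₀, hs₀⟩, heC₀⟩
  · by_cases hsupp : ∃ w, w ∈ G.suppV C₁ ∧ w ∈ G.suppV C₂
    · exact Or.inr ⟨C₁ ∪ C₂, ⟨C₁, C₂, ⟨h₁, hs₁⟩, ⟨h₂, hs₂⟩, hdisj',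
        Or.inl ⟨hsupp, rfl⟩⟩, Finset.mem_union_left _ he₁⟩
    · push_neg at hsupp
      have hdisjsupp : Disjoint (G.suppV C₁) (G.suppV C₂) := by
        rw [Finset.disjoint_left]
        exact fun w hw1 hw2 => hsupp w hw1 hw2
      obtain ⟨P, u, v, hpath, hu, hv, hPdisj⟩ :=
        G.exists_join_path hdisjsupp hconn.2 h₁.nonempty_supp
          h₂.nonempty_supp
      exact Or.inr ⟨C₁ ∪ C₂ ∪ P, ⟨C₁, C₂, ⟨h₁, hs₁⟩, ⟨h₂, hs₂⟩, hdisj',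
        Or.inr ⟨P, u, v, hpath, hu, hv, hPdisj, rfl⟩⟩,
        Finset.mem_union_left _ (Finset.mem_union_left _ he₁)⟩
end SignedGraph
open SignedGraph Finset in
/-- Let `G` be a connected unbalanced signed graph such that for
every edge `f` the graph `G - f` contains no balanced connected component.
Then every edge of `G` belongs either to a balanced circuit or to a weak
unbalanced bicircuit of `G`. -/
theorem stmt7 {V E : Type} [Fintype V] [Fintype E] [DecidableEq V]
    [DecidableEq E] (G : SignedGraph V E) (hconn : G.Connected)
    (hunbal : ¬ G.Balanced)
    (hcomp : ∀ f : E, G.NoBalancedComponentAvoiding f) :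
    ∀ e : E,
      (∃ S : Finset E, G.IsBalancedCircuit S ∧ e ∈ S) ∨
      (∃ T : Finset E, G.IsWeakBicircuit T ∧ e ∈ T) := by
  intro e
  by_cases hloop : G.ends e false = G.ends e true
  · -- `e` is a loop
    have hcirc := G.loop_circuit hloop
    have hsign : G.signOf {e} = G.sign e := Finset.prod_singleton _ _
    rcases Int.units_eq_one_or (G.sign e) with hs | hs
    · exact Or.inl ⟨{e}, ⟨hcirc, by rw [hsign, hs]⟩,
        Finset.mem_singleton_self e⟩
    · exact G.main_common hconn hcomp hcirc (by rw [hsign, hs])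
        (Finset.mem_singleton_self e)
  · by_cases hcut : Relation.ReflTransGen (G.AdjOn (Finset.univ.erase e))
        (G.ends e false) (G.ends e true)
    · -- `e` lies on a circuit
      obtain ⟨l₀, hl₀⟩ := Walk.of_rtg hcut
      obtain ⟨l, a', b', hw, ha', hb', hnd, -, -⟩ :=
        G.exists_min_walk (PA := (· = G.ends e false))
          (PB := (· = G.ends e true)) rfl rfl hl₀
      subst ha' hb'
      have hlne : l ≠ [] := by
        rintro rfl
        exact hloop (walk_nil_iff.mp hw)
      obtain ⟨hpath, -⟩ := hw.nodup_path hnd hlne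
      have henot : e ∉ edgesOf l := by
        intro hcon
        exact (Finset.mem_erase.mp (hw.edgesOf_subset hcon)).1 rfl
      obtain ⟨hcirc, -⟩ := G.circuit_insert_path hpath henot
        (i := false) rfl rfl
      rcases Int.units_eq_one_or (G.signOf (insert e (edgesOf l)))
        with hs | hs
      · exact Or.inl ⟨_, ⟨hcirc, hs⟩, Finset.mem_insert_self _ _⟩
      · exact G.main_common hconn hcomp hcirc hs (Finset.mem_insert_self _ _)
    · -- `e` is a bridge
      obtain ⟨C₁, hC₁, hs₁, he₁, hconn₁⟩ := hcomp e (G.ends e false)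
      obtain ⟨C₂, hC₂, hs₂, he₂, hconn₂⟩ := hcomp e (G.ends e true)
      have hsep : ∀ x : V,
          Relation.ReflTransGen (G.AdjOn (Finset.univ.erase e)) x
            (G.ends e false) →
          Relation.ReflTransGen (G.AdjOn (Finset.univ.erase e)) x
            (G.ends e true) → False :=
        fun x h1 h2 => hcut ((rtg_symm h1).trans h2)
      have hdisjE : Disjoint C₁ C₂ := by
        rw [Finset.disjoint_left]
        intro f hf1 hf2
        exact hsep (G.ends f false)
          (hconn₁ _ (ends_mem_suppV hf1 false))
          (hconn₂ _ (ends_mem_suppV hf2 false))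
      obtain ⟨a₀, ha₀⟩ := hC₁.nonempty_supp
      obtain ⟨l₁₀, hl₁₀⟩ := Walk.of_rtg (hconn₁ a₀ ha₀)
      obtain ⟨l₁, a', bu, hw₁, ha', hbu, hnd₁, htgt₁, -⟩ :=
        G.exists_min_walk (PA := (· ∈ G.suppV C₁))
          (PB := (· = G.ends e false)) ha₀ rfl hl₁₀
      subst hbu
      obtain ⟨b₀, hb₀⟩ := hC₂.nonempty_supp
      obtain ⟨l₂₀, hl₂₀⟩ := Walk.of_rtg (rtg_symm (hconn₂ b₀ hb₀))
      obtain ⟨l₂, av, b', hw₂, hav, hb', hnd₂, -, hsrc₂⟩ :=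
        G.exists_min_walk (PA := (· = G.ends e true))
          (PB := (· ∈ G.suppV C₂)) rfl hb₀ hl₂₀
      subst hav
      have hver₁ : ∀ x ∈ G.verts l₁ a',
          Relation.ReflTransGen (G.AdjOn (Finset.univ.erase e)) x
            (G.ends e false) := by
        intro x hx
        have h := rtg_mono (hw₁.edgesOf_subset) (hw₁.verts_conn hx)
        exact (rtg_symm h).trans (hconn₁ a' ha')
      have hver₂ : ∀ x ∈ G.verts l₂ (G.ends e true),
          Relation.ReflTransGen (G.AdjOn (Finset.univ.erase e)) x
            (G.ends e true) := by
        intro x hx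
        exact rtg_symm (rtg_mono (hw₂.edgesOf_subset) (hw₂.verts_conn hx))
      have hL : G.Walk Finset.univ (l₁ ++ (e, false) :: l₂) a' b' :=
        (hw₁.mono (Finset.subset_univ _)).append
          (Walk.cons (Finset.mem_univ e) rfl
            (hw₂.mono (Finset.subset_univ _)))
      have hndL : (G.verts (l₁ ++ (e, false) :: l₂) a').Nodup := by
        rw [verts_append]
        refine List.Nodup.append hnd₁ ?_ ?_
        · exact hnd₂
        · intro x hx hx'
          exact hsep x (hver₁ x hx) (hver₂ x hx')
      have hLne : (l₁ ++ (e, false) :: l₂) ≠ [] := by simp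
      obtain ⟨hpath, -⟩ := hL.nodup_path hndL hLne
      have heL : e ∈ edgesOf (l₁ ++ (e, false) :: l₂) :=
        mem_edgesOf.mpr ⟨(e, false), by simp, rfl⟩
      have hPdisj : Disjoint (edgesOf (l₁ ++ (e, false) :: l₂)) (C₁ ∪ C₂) := by
        rw [Finset.disjoint_left]
        intro x hx hxC
        obtain ⟨p, hp, rfl⟩ := mem_edgesOf.mp hx
        rw [List.mem_append, List.mem_cons] at hp
        rcases hp with hp | hp | hp
        · rcases Finset.mem_union.mp hxC with hxC | hxC
          · exact htgt₁ p hp (ends_mem_suppV hxC (!p.2))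
          · exact hsep (G.ends p.1 p.2)
              (hver₁ _ (hw₁.src_mem_verts hp))
              (hconn₂ _ (ends_mem_suppV hxC p.2))
        · subst hp
          rcases Finset.mem_union.mp hxC with hxC | hxC
          · exact he₁ hxC
          · exact he₂ hxC
        · rcases Finset.mem_union.mp hxC with hxC | hxC
          · exact hsep (G.ends p.1 (!p.2))
              (hconn₁ _ (ends_mem_suppV hxC (!p.2)))
              (hver₂ _ (hw₂.tgt_mem_verts hp))
          · exact hsrc₂ p hp (ends_mem_suppV hxC p.2)
      exact Or.inr ⟨C₁ ∪ C₂ ∪ edgesOf (l₁ ++ (e, false) :: l₂),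
        ⟨C₁, C₂, ⟨hC₁, hs₁⟩, ⟨hC₂, hs₂⟩, hdisjE,
          Or.inr ⟨edgesOf (l₁ ++ (e, false) :: l₂), a', b', hpath, ha', hb',
            hPdisj, rfl⟩⟩,
        Finset.mem_union_right _ heL⟩
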